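/- arXiv:2202.09215 — 6 statements merged into one kernel-verified Lean document; each statement's English description precedes it below -/
import Mathlib

section
/- Let φ = (1+√5)/2. Then A_1 ≥ φ⁻¹ · W_1. In words: for every arrival order, the adaptive order-unaware threshold algorithm obtains an expected value of at least the inverse golden ratio times the expected value of the optimal order-aware online algorithm (Theorem 3.1, Main Result 1). -/
open MeasureTheory ProbabilityTheory

/-!
Backward induction over the boxes, carrying at box `k` the invariants `W k ≤ φ A k` and, for the
box `t₀ = k - 1` just before it, `α t₀ ≤ φ A k` and `β t₀ ≤ A k`. Since the value `x` of box `k`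
is independent of the maximum `y_k` of the later boxes, each invariant at `k` follows by
integrating over `x` a pointwise inequality between `x`, the threshold `τ = max α_k β_k` and the
continuation value `A (k + 1)`; all of them come down to `φ² = φ + 1`. Accepting `x ≥ τ` earns at
least `φ⁻¹ max x (W (k + 1))` because `W (k + 1) ≤ E y_k = φ α_k ≤ φ x`, and rejecting `x < τ`
earns `A (k + 1) ≥ φ⁻¹ τ` by the invariants at `k + 1`. For `β t₀` one uses that the fixed point
of `b ↦ E[(Y - φ b)⁺]` is monotone in `Y`, so `β_k ≤ β t₀` and `τ ≤ φ β t₀`.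
-/

section Fubini

variable {Ω α β : Type*} [MeasurableSpace Ω] [MeasurableSpace α] [MeasurableSpace β]
  {μ : Measure Ω} {X : Ω → α} {Y : Ω → β} {F : α → β → ℝ}

theorem integral_map_eq_integral_comp (hY : Measurable Y) (hF : Measurable (Function.uncurry F))
    (x : α) : ∫ y, F x y ∂(μ.map Y) = ∫ ω', F x (Y ω') ∂μ :=
  integral_map hY.aemeasurable (hF.comp measurable_prodMk_left).aestronglyMeasurable

theorem stronglyMeasurable_integral_comp [SFinite μ] (hY : Measurable Y)
    (hF : Measurable (Function.uncurry F)) :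
    StronglyMeasurable fun x ↦ ∫ ω', F x (Y ω') ∂μ :=
  (hF.comp (measurable_fst.prodMk (hY.comp measurable_snd))).stronglyMeasurable.integral_prod_right'

variable [IsProbabilityMeasure μ]

theorem ProbabilityTheory.IndepFun.integrable_uncurry_map_prod_map (hXY : X ⟂ᵢ[μ] Y)
    (hX : Measurable X) (hY : Measurable Y) (hF : Measurable (Function.uncurry F))
    (hFi : Integrable (fun ω ↦ F (X ω) (Y ω)) μ) :
    Integrable (Function.uncurry F) ((μ.map X).prod (μ.map Y)) := by
  rwa [← hXY.map_prod_eq_prod_map_map hX.aemeasurable hY.aemeasurable,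
    integrable_map_measure hF.aestronglyMeasurable (hX.prodMk hY).aemeasurable]

theorem ProbabilityTheory.IndepFun.integral_comp_eq_integral_integral (hXY : X ⟂ᵢ[μ] Y)
    (hX : Measurable X) (hY : Measurable Y) (hF : Measurable (Function.uncurry F))
    (hFi : Integrable (fun ω ↦ F (X ω) (Y ω)) μ) :
    ∫ ω, F (X ω) (Y ω) ∂μ = ∫ ω, ∫ ω', F (X ω) (Y ω') ∂μ ∂μ := by
  calc ∫ ω, F (X ω) (Y ω) ∂μ = ∫ p, Function.uncurry F p ∂((μ.map X).prod (μ.map Y)) := by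
        rw [← hXY.map_prod_eq_prod_map_map hX.aemeasurable hY.aemeasurable,
          integral_map (hX.prodMk hY).aemeasurable hF.aestronglyMeasurable]
        rfl
    _ = ∫ x, ∫ y, F x y ∂(μ.map Y) ∂(μ.map X) :=
        integral_prod _ (hXY.integrable_uncurry_map_prod_map hX hY hF hFi)
    _ = ∫ ω, ∫ ω', F (X ω) (Y ω') ∂μ ∂μ := by
        simp_rw [integral_map_eq_integral_comp hY hF]
        exact integral_map hX.aemeasurable
          (stronglyMeasurable_integral_comp hY hF).aestronglyMeasurable

theorem ProbabilityTheory.IndepFun.integrable_integral_comp (hXY : X ⟂ᵢ[μ] Y)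
    (hX : Measurable X) (hY : Measurable Y) (hF : Measurable (Function.uncurry F))
    (hFi : Integrable (fun ω ↦ F (X ω) (Y ω)) μ) :
    Integrable (fun ω ↦ ∫ ω', F (X ω) (Y ω') ∂μ) μ := by
  have h := (hXY.integrable_uncurry_map_prod_map hX hY hF hFi).integral_prod_left
  simp_rw [Function.uncurry_apply_pair, integral_map_eq_integral_comp hY hF] at h
  exact (integrable_map_measure (stronglyMeasurable_integral_comp hY hF).aestronglyMeasurable
    hX.aemeasurable).mp h

end Fubini

section LaterMax

variable {Ω : Type*} {n : ℕ} {v : Fin n → Ω → ℝ}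

noncomputable def laterMax (v : Fin n → Ω → ℝ) (t : Fin n) (ω : Ω) : ℝ :=
  ⨆ s : {s : Fin n // t < s}, v s ω

theorem laterMax_nonneg (hv : ∀ t ω, 0 ≤ v t ω) (t : Fin n) (ω : Ω) : 0 ≤ laterMax v t ω :=
  Real.iSup_nonneg fun s ↦ hv s ω

theorem laterMax_le_sum (hv : ∀ t ω, 0 ≤ v t ω) (t : Fin n) (ω : Ω) :
    laterMax v t ω ≤ ∑ s, v s ω :=
  Real.iSup_le (fun s ↦ Finset.single_le_sum (fun s _ ↦ hv s ω) (Finset.mem_univ s.1))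
    (Finset.sum_nonneg fun s _ ↦ hv s ω)

theorem laterMax_eq_zero {t : Fin n} (ht : (t : ℕ) + 1 = n) (ω : Ω) : laterMax v t ω = 0 := by
  have : IsEmpty {s : Fin n // t < s} := ⟨fun s ↦ by have := s.1.isLt; have := s.2; omega⟩
  exact Real.iSup_of_isEmpty _

theorem laterMax_eq_max (hv : ∀ t ω, 0 ≤ v t ω) {t t' : Fin n} (h : (t' : ℕ) = t + 1) (ω : Ω) :
    laterMax v t ω = max (v t' ω) (laterMax v t' ω) := by
  have htt' : t < t' := by rw [Fin.lt_def]; omega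
  have hbdd : ∀ t'', BddAbove (Set.range fun s : {s : Fin n // t'' < s} ↦ v s ω) :=
    fun _ ↦ (Set.finite_range _).bddAbove
  have : Nonempty {s : Fin n // t < s} := ⟨⟨t', htt'⟩⟩
  apply le_antisymm
  · refine ciSup_le fun s ↦ ?_
    rcases eq_or_ne s.1 t' with hs | hs
    · exact hs ▸ le_max_left _ _
    · have : t' < s.1 := by
        have := s.2; rw [Fin.lt_def] at this ⊢; have := Fin.val_ne_of_ne hs; omega
      exact (le_ciSup (hbdd t') ⟨s.1, this⟩).trans (le_max_right _ _)
  · exact max_le (le_ciSup (hbdd t) ⟨t', htt'⟩)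
      (Real.iSup_le (fun s ↦ le_ciSup (hbdd t) ⟨s.1, htt'.trans s.2⟩) (laterMax_nonneg hv t ω))

variable [MeasurableSpace Ω] {μ : Measure Ω}

theorem measurable_laterMax (hv : ∀ t, Measurable (v t)) (t : Fin n) :
    Measurable (laterMax v t) :=
  Measurable.iSup fun s ↦ hv s

theorem integrable_laterMax (hvm : ∀ t, Measurable (v t)) (hv : ∀ t ω, 0 ≤ v t ω)
    (hvi : ∀ t, Integrable (v t) μ) (t : Fin n) : Integrable (laterMax v t) μ := by
  refine (integrable_finsetSum Finset.univ fun s _ ↦ hvi s).mono'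
    (measurable_laterMax hvm t).aestronglyMeasurable (Filter.Eventually.of_forall fun ω ↦ ?_)
  rw [Real.norm_of_nonneg (laterMax_nonneg hv t ω)]
  exact laterMax_le_sum hv t ω

theorem ProbabilityTheory.iIndepFun.indepFun_laterMax (hind : iIndepFun v μ)
    (hvm : ∀ t, Measurable (v t)) (t : Fin n) : v t ⟂ᵢ[μ] laterMax v t := by
  classical
  have hdisj : Disjoint {t} (Finset.univ.filter (t < ·)) := by simp
  exact (hind.indepFun_finset _ _ hdisj hvm).comp
    (measurable_pi_apply ⟨t, Finset.mem_singleton_self t⟩)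
    (Measurable.iSup (f := fun (s : {s : Fin n // t < s}) (u : Finset.univ.filter (t < ·) → ℝ) ↦
      u ⟨s.1, by simpa using s.2⟩) fun _ ↦ measurable_pi_apply _)

end LaterMax

noncomputable def thresholdPayoff (τ a x : ℝ) : ℝ := if τ ≤ x then x else a

section GoldenRatio

open Real goldenRatio

variable {α β a x : ℝ}

theorem max_le_goldenRatio_mul_thresholdPayoff {w : ℝ} (hβ : 0 ≤ β) (hw : w ≤ φ * α)
    (hwa : w ≤ φ * a) (hαa : α ≤ φ * a) (hβa : β ≤ a) :
    max x w ≤ φ * thresholdPayoff (max α β) a x := by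
  have := one_lt_goldenRatio
  unfold thresholdPayoff
  split_ifs with hx
  · have hαx : α ≤ x := le_of_max_le_left hx
    have hβx : β ≤ x := le_of_max_le_right hx
    exact max_le (by nlinarith) (hw.trans (by nlinarith))
  · rw [not_le] at hx
    refine max_le (hx.le.trans (max_le hαa (by nlinarith))) hwa

theorem le_goldenRatio_sq_mul_thresholdPayoff {m : ℝ} (hβ : 0 ≤ β) (hαa : α ≤ φ * a)
    (hβa : β ≤ a) (hm_add : 0 ≤ x → m ≤ x + φ * α) (hm_max : m ≤ max x (φ * β) + β) :
    m ≤ φ ^ 2 * thresholdPayoff (max α β) a x := by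
  have := one_lt_goldenRatio
  have hsq := goldenRatio_sq
  unfold thresholdPayoff
  split_ifs with hx
  · have hαx : α ≤ x := le_of_max_le_left hx
    have hβx : β ≤ x := le_of_max_le_right hx
    nlinarith [hm_add (hβ.trans hβx)]
  · rw [not_le] at hx
    rcases le_total α (φ * β) with hαβ | hβα
    · have : max x (φ * β) = φ * β := max_eq_right (hx.le.trans (max_le hαβ (by nlinarith)))
      nlinarith
    · have : max x (φ * β) ≤ α := max_le (hx.le.trans (max_le le_rfl (by nlinarith))) hβα
      nlinarith

theorem le_thresholdPayoff_of_le_posPart_add {g β₀ : ℝ} (hβ : 0 ≤ β) (hββ₀ : β ≤ β₀)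
    (hαβ₀ : α ≤ φ * β₀) (hβa : β ≤ a) (hg : g ≤ max (x - φ * β₀) 0 + β) :
    g ≤ thresholdPayoff (max α β) a x := by
  have := one_lt_goldenRatio
  have hτ : max α β ≤ φ * β₀ := max_le hαβ₀ (by nlinarith)
  unfold thresholdPayoff
  split_ifs with hx
  · rcases le_total x (φ * β₀) with h | h
    · rw [max_eq_right (by linarith)] at hg
      linarith [le_max_right α β]
    · rw [max_eq_left (by linarith)] at hg
      nlinarith
  · rw [not_le] at hx
    rw [max_eq_right (by linarith)] at hg
    linarith

end GoldenRatio

section Integrals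

variable {Ω : Type*} [MeasurableSpace Ω] {μ : Measure Ω} [IsProbabilityMeasure μ]
  {X Y Y' : Ω → ℝ}

theorem measurable_thresholdPayoff (τ a : ℝ) : Measurable (thresholdPayoff τ a) :=
  Measurable.ite measurableSet_Ici measurable_id measurable_const

theorem integrable_thresholdPayoff (hX : Integrable X μ) (τ a : ℝ) :
    Integrable (fun ω ↦ thresholdPayoff τ a (X ω)) μ := by
  refine (hX.abs.add (integrable_const |a|)).mono'
    ((measurable_thresholdPayoff τ a).comp_aemeasurable hX.aemeasurable).aestronglyMeasurable
    (Filter.Eventually.of_forall fun ω ↦ ?_)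
  unfold thresholdPayoff
  split_ifs <;> simp [abs_nonneg]

theorem integral_thresholdPayoff (hXm : Measurable X) (hX : Integrable X μ) (τ a : ℝ) :
    ∫ ω, thresholdPayoff τ a (X ω) ∂μ =
      (∫ ω, (if τ ≤ X ω then X ω else 0) ∂μ) + (μ {ω | X ω < τ}).toReal * a := by
  have hs : MeasurableSet {ω | X ω < τ} := measurableSet_lt hXm measurable_const
  have hsplit : (fun ω ↦ thresholdPayoff τ a (X ω)) =
      fun ω ↦ thresholdPayoff τ 0 (X ω) + {ω | X ω < τ}.indicator (fun _ ↦ a) ω := by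
    ext ω
    by_cases h : τ ≤ X ω <;> simp [thresholdPayoff, h, Set.indicator]
  rw [hsplit, integral_add (integrable_thresholdPayoff hX τ 0) ((integrable_const a).indicator hs),
    integral_indicator_const a hs, measureReal_def, smul_eq_mul]
  rfl

theorem integral_max_const_le_add (hY : Integrable Y μ) (hY0 : ∀ ω, 0 ≤ Y ω) {x : ℝ}
    (hx : 0 ≤ x) : ∫ ω, max x (Y ω) ∂μ ≤ x + ∫ ω, Y ω ∂μ := by
  calc ∫ ω, max x (Y ω) ∂μ ≤ ∫ ω, (x + Y ω) ∂μ :=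
        integral_mono ((integrable_const x).sup hY) ((integrable_const x).add hY)
          fun ω ↦ max_le (by linarith [hY0 ω]) (by linarith)
    _ = x + ∫ ω, Y ω ∂μ := by simp [integral_add (integrable_const x) hY]

theorem integral_max_const_le (hY : Integrable Y μ) (x c : ℝ) :
    ∫ ω, max x (Y ω) ∂μ ≤ max x c + ∫ ω, max (Y ω - c) 0 ∂μ := by
  have hY' : Integrable (fun ω ↦ max (Y ω - c) 0) μ := (hY.sub (integrable_const c)).pos_part
  calc ∫ ω, max x (Y ω) ∂μ ≤ ∫ ω, (max x c + max (Y ω - c) 0) ∂μ :=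
        integral_mono ((integrable_const x).sup hY) ((integrable_const _).add hY')
          fun ω ↦ max_le (by linarith [le_max_left x c, le_max_right (Y ω - c) 0])
            (by linarith [le_max_right x c, le_max_left (Y ω - c) 0])
    _ = max x c + ∫ ω, max (Y ω - c) 0 ∂μ := by simp [integral_add (integrable_const _) hY']

theorem integral_posPart_max_const_sub_le (hY : Integrable Y μ) (x c : ℝ) :
    ∫ ω, max (max x (Y ω) - c) 0 ∂μ ≤ max (x - c) 0 + ∫ ω, max (Y ω - c) 0 ∂μ := by
  have hY' : Integrable (fun ω ↦ max (Y ω - c) 0) μ := (hY.sub (integrable_const c)).pos_part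
  calc ∫ ω, max (max x (Y ω) - c) 0 ∂μ ≤ ∫ ω, (max (x - c) 0 + max (Y ω - c) 0) ∂μ :=
        integral_mono ((((integrable_const x).sup hY).sub (integrable_const c)).pos_part)
          ((integrable_const _).add hY') fun ω ↦ by
            rcases le_total x (Y ω) with h | h
            · rw [max_eq_right h]; exact le_add_of_nonneg_left (le_max_right _ _)
            · rw [max_eq_left h]; exact le_add_of_nonneg_right (le_max_right _ _)
    _ = max (x - c) 0 + ∫ ω, max (Y ω - c) 0 ∂μ := by
        simp [integral_add (integrable_const _) hY']

theorem max_const_integral_le (hY : Integrable Y μ) (x : ℝ) :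
    max x (∫ ω, Y ω ∂μ) ≤ ∫ ω, max x (Y ω) ∂μ := by
  have hmax : Integrable (fun ω ↦ max x (Y ω)) μ := (integrable_const x).sup hY
  refine max_le ?_ (integral_mono hY hmax fun ω ↦ le_max_right _ _)
  simpa using integral_mono (integrable_const x) hmax fun ω ↦ le_max_left x (Y ω)

theorem integral_posPart_sub_le_of_le (hY : Integrable Y μ) (hY' : Integrable Y' μ)
    (hYY' : ∀ ω, Y ω ≤ Y' ω) {c c' : ℝ} (hcc' : c' ≤ c) :
    ∫ ω, max (Y ω - c) 0 ∂μ ≤ ∫ ω, max (Y' ω - c') 0 ∂μ :=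
  integral_mono (hY.sub (integrable_const c)).pos_part (hY'.sub (integrable_const c')).pos_part
    fun ω ↦ max_le_max (by linarith [hYY' ω]) le_rfl

theorem le_of_integral_posPart_fixedPoint (hY : Integrable Y μ) (hY' : Integrable Y' μ)
    (hYY' : ∀ ω, Y ω ≤ Y' ω) {k b b' : ℝ} (hk : 0 ≤ k)
    (hb : ∫ ω, max (Y ω - k * b) 0 ∂μ = b) (hb' : ∫ ω, max (Y' ω - k * b') 0 ∂μ = b') :
    b ≤ b' := by
  by_contra! hlt
  have := integral_posPart_sub_le_of_le hY hY' hYY' (mul_le_mul_of_nonneg_left hlt.le hk)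
  linarith

theorem integral_le_of_integral_posPart_fixedPoint (hY : Integrable Y μ) {k b : ℝ}
    (hb : ∫ ω, max (Y ω - k * b) 0 ∂μ = b) : ∫ ω, Y ω ∂μ ≤ (k + 1) * b := by
  have : ∫ ω, (Y ω - k * b) ∂μ ≤ ∫ ω, max (Y ω - k * b) 0 ∂μ :=
    integral_mono (hY.sub (integrable_const _)) (hY.sub (integrable_const _)).pos_part
      fun ω ↦ le_max_left _ _
  rw [hb, integral_sub hY (integrable_const _)] at this
  simp only [integral_const, probReal_univ, one_smul] at this
  linarith

theorem ProbabilityTheory.IndepFun.integral_max_const_le_integral_max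
    (hXY : X ⟂ᵢ[μ] Y) (hXm : Measurable X) (hYm : Measurable Y) (hX : Integrable X μ)
    (hY : Integrable Y μ) {w : ℝ} (hw : w ≤ ∫ ω, Y ω ∂μ) :
    ∫ ω, max (X ω) w ∂μ ≤ ∫ ω, max (X ω) (Y ω) ∂μ := by
  have hF : Measurable (Function.uncurry fun x y : ℝ ↦ max x y) :=
    measurable_fst.max measurable_snd
  have hFi : Integrable (fun ω ↦ max (X ω) (Y ω)) μ := hX.sup hY
  rw [hXY.integral_comp_eq_integral_integral hXm hYm hF hFi]
  exact integral_mono (hX.sup (integrable_const w))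
    (hXY.integrable_integral_comp hXm hYm hF hFi) fun ω ↦
      (max_le_max le_rfl hw).trans (max_const_integral_le hY (X ω))

end Integrals

section OneStep

open Real goldenRatio

variable {Ω : Type*} [MeasurableSpace Ω] {μ : Measure Ω} [IsProbabilityMeasure μ] {X Y : Ω → ℝ}
  {α β a : ℝ}

theorem integral_max_const_le_goldenRatio_mul (hX : Integrable X μ) {w : ℝ} (hβ : 0 ≤ β)
    (hw : w ≤ φ * α) (hwa : w ≤ φ * a) (hαa : α ≤ φ * a) (hβa : β ≤ a) :
    ∫ ω, max (X ω) w ∂μ ≤ φ * ∫ ω, thresholdPayoff (max α β) a (X ω) ∂μ := by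
  rw [← integral_const_mul]
  exact integral_mono (hX.sup (integrable_const w))
    ((integrable_thresholdPayoff hX _ _).const_mul _)
    fun ω ↦ max_le_goldenRatio_mul_thresholdPayoff hβ hw hwa hαa hβa

theorem ProbabilityTheory.IndepFun.le_goldenRatio_mul_integral_thresholdPayoff (hXY : X ⟂ᵢ[μ] Y)
    (hXm : Measurable X) (hYm : Measurable Y) (hX : Integrable X μ) (hY : Integrable Y μ)
    (hY0 : ∀ ω, 0 ≤ Y ω) (hβ : 0 ≤ β) (hα : ∫ ω, Y ω ∂μ = φ * α)
    (hβY : ∫ ω, max (Y ω - φ * β) 0 ∂μ = β) (hαa : α ≤ φ * a) (hβa : β ≤ a) {α₀ : ℝ}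
    (hα₀ : ∫ ω, max (X ω) (Y ω) ∂μ = φ * α₀) :
    α₀ ≤ φ * ∫ ω, thresholdPayoff (max α β) a (X ω) ∂μ := by
  refine le_of_mul_le_mul_left ?_ goldenRatio_pos
  rw [← hα₀, ← mul_assoc, ← sq]
  have hF : Measurable (Function.uncurry fun x y : ℝ ↦ max x y) :=
    measurable_fst.max measurable_snd
  have hFi : Integrable (fun ω ↦ max (X ω) (Y ω)) μ := hX.sup hY
  rw [hXY.integral_comp_eq_integral_integral hXm hYm hF hFi, ← integral_const_mul]
  refine integral_mono (hXY.integrable_integral_comp hXm hYm hF hFi)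
    ((integrable_thresholdPayoff hX _ _).const_mul _) fun ω ↦ ?_
  refine le_goldenRatio_sq_mul_thresholdPayoff hβ hαa hβa (fun hx ↦ ?_) ?_
  · simpa [hα] using integral_max_const_le_add hY hY0 hx
  · simpa [hβY] using integral_max_const_le hY (X ω) (φ * β)

theorem ProbabilityTheory.IndepFun.le_integral_thresholdPayoff (hXY : X ⟂ᵢ[μ] Y)
    (hXm : Measurable X) (hYm : Measurable Y) (hX : Integrable X μ) (hY : Integrable Y μ)
    (hβ : 0 ≤ β) (hα : ∫ ω, Y ω ∂μ = φ * α) (hβY : ∫ ω, max (Y ω - φ * β) 0 ∂μ = β)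
    (hβa : β ≤ a) {β₀ : ℝ} (hβ₀ : ∫ ω, max (max (X ω) (Y ω) - φ * β₀) 0 ∂μ = β₀) :
    β₀ ≤ ∫ ω, thresholdPayoff (max α β) a (X ω) ∂μ := by
  have hXYi : Integrable (fun ω ↦ max (X ω) (Y ω)) μ := hX.sup hY
  have hββ₀ : β ≤ β₀ := le_of_integral_posPart_fixedPoint hY hXYi (fun ω ↦ le_max_right _ _)
    goldenRatio_pos.le hβY hβ₀
  have hαβ₀ : α ≤ φ * β₀ := by
    have h₁ := integral_le_of_integral_posPart_fixedPoint hXYi hβ₀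
    have h₂ : ∫ ω, Y ω ∂μ ≤ ∫ ω, max (X ω) (Y ω) ∂μ :=
      integral_mono hY hXYi fun ω ↦ le_max_right _ _
    nlinarith [goldenRatio_sq, goldenRatio_pos]
  have hYβ₀ : ∫ ω, max (Y ω - φ * β₀) 0 ∂μ ≤ β := hβY ▸ integral_posPart_sub_le_of_le hY hY
    (fun _ ↦ le_rfl) (mul_le_mul_of_nonneg_left hββ₀ goldenRatio_pos.le)
  have hF : Measurable (Function.uncurry fun x y : ℝ ↦ max (max x y - φ * β₀) 0) := by
    fun_prop
  have hFi : Integrable (fun ω ↦ max (max (X ω) (Y ω) - φ * β₀) 0) μ :=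
    (hXYi.sub (integrable_const _)).pos_part
  rw [← hβ₀, hXY.integral_comp_eq_integral_integral hXm hYm hF hFi]
  exact integral_mono (hXY.integrable_integral_comp hXm hYm hF hFi)
    (integrable_thresholdPayoff hX _ _) fun ω ↦
      le_thresholdPayoff_of_le_posPart_add hβ hββ₀ hαβ₀ hβa
        ((integral_posPart_max_const_sub_le hY (X ω) _).trans (add_le_add_right hYβ₀ _))

end OneStep

theorem le_integral_laterMax {Ω : Type*} [MeasurableSpace Ω] {μ : Measure Ω}
    [IsProbabilityMeasure μ] {n : ℕ} {v : Fin n → Ω → ℝ} (hvm : ∀ t, Measurable (v t))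
    (hv : ∀ t ω, 0 ≤ v t ω) (hvi : ∀ t, Integrable (v t) μ) (hind : iIndepFun v μ)
    {W : ℕ → ℝ} (hWn : W n = 0) (hW : ∀ t : Fin n, W t = ∫ ω, max (v t ω) (W (t + 1)) ∂μ)
    (t : Fin n) : W (t + 1) ≤ ∫ ω, laterMax v t ω ∂μ := by
  obtain ⟨k, hk⟩ := t
  have hkn : k ≤ n := hk.le
  revert hk
  induction hkn using Nat.decreasingInduction with
  | self => exact fun hk ↦ absurd hk (lt_irrefl n)
  | of_succ k _ ih =>
    intro hk
    rcases (Nat.add_one_le_of_lt hk).eq_or_lt with hlast | hlt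
    · change W (k + 1) ≤ _
      rw [hlast, hWn]
      exact integral_nonneg (laterMax_nonneg hv _)
    · calc W (k + 1) = ∫ ω, max (v ⟨k + 1, hlt⟩ ω) (W (k + 1 + 1)) ∂μ := hW ⟨k + 1, hlt⟩
        _ ≤ ∫ ω, max (v ⟨k + 1, hlt⟩ ω) (laterMax v ⟨k + 1, hlt⟩ ω) ∂μ :=
          (hind.indepFun_laterMax hvm _).integral_max_const_le_integral_max (hvm _)
            (measurable_laterMax hvm _) (hvi _) (integrable_laterMax hvm hv hvi _) (ih hlt)
        _ = ∫ ω, laterMax v ⟨k, hk⟩ ω ∂μ := by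
          simp_rw [laterMax_eq_max hv (t := ⟨k, hk⟩) (t' := ⟨k + 1, hlt⟩) rfl]

theorem order_unaware_golden_ratio_general {Ω : Type*} [MeasurableSpace Ω]
    (μ : Measure Ω) [IsProbabilityMeasure μ]
    (n : ℕ)
    (v : Fin n → Ω → ℝ)
    (hmeas : ∀ t, Measurable (v t))
    (hnonneg : ∀ t ω, 0 ≤ v t ω)
    (hint : ∀ t, Integrable (v t) μ)
    (hindep : iIndepFun v μ)
    (φ : ℝ) (hφ : φ = (1 + Real.sqrt 5) / 2)
    (y : Fin n → Ω → ℝ)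
    (hy : ∀ t ω, y t ω = ⨆ s : {s : Fin n // t < s}, v s ω)
    (α β τ : Fin n → ℝ)
    (hα : ∀ t, α t = φ⁻¹ * ∫ ω, y t ω ∂μ)
    (hβ0 : ∀ t, 0 ≤ β t)
    (hβ : ∀ t, (∫ ω, max (y t ω - φ * β t) 0 ∂μ) = β t)
    (hτ : ∀ t, τ t = max (α t) (β t))
    (A W : ℕ → ℝ)
    (hAn : A n = 0)
    (hA : ∀ t : Fin n, A t =
      (∫ ω, (if τ t ≤ v t ω then v t ω else 0) ∂μ)
        + (μ {ω | v t ω < τ t}).toReal * A ((t : ℕ) + 1))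
    (hWn : W n = 0)
    (hW : ∀ t : Fin n, W t = ∫ ω, max (v t ω) (W ((t : ℕ) + 1)) ∂μ) :
    A 0 ≥ φ⁻¹ * W 0 := by
  obtain rfl : φ = Real.goldenRatio := hφ
  obtain rfl : y = laterMax v := funext fun t ↦ funext (hy t)
  have hEy (t : Fin n) : ∫ ω, laterMax v t ω ∂μ = Real.goldenRatio * α t := by
    rw [hα, mul_inv_cancel_left₀ Real.goldenRatio_ne_zero]
  have hA' (t : Fin n) : A t =
      ∫ ω, thresholdPayoff (max (α t) (β t)) (A (t + 1)) (v t ω) ∂μ := by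
    rw [hA, hτ, integral_thresholdPayoff (hmeas t) (hint t)]
  have key : ∀ k ≤ n, W k ≤ Real.goldenRatio * A k ∧
      ∀ t₀ : Fin n, (t₀ : ℕ) + 1 = k → α t₀ ≤ Real.goldenRatio * A k ∧ β t₀ ≤ A k := by
    intro k hk
    induction hk using Nat.decreasingInduction with
    | self =>
      refine ⟨by simp [hWn, hAn], fun t₀ ht₀ ↦ ?_⟩
      rw [hAn, hα, ← hβ t₀]
      simp [laterMax_eq_zero ht₀, mul_nonneg Real.goldenRatio_pos.le (hβ0 t₀)]
    | of_succ k hk ih =>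
      obtain ⟨hαk, hβk⟩ := ih.2 ⟨k, hk⟩ rfl
      have hXY := hindep.indepFun_laterMax hmeas ⟨k, hk⟩
      have hyk := measurable_laterMax hmeas ⟨k, hk⟩
      have hyik := integrable_laterMax hmeas hnonneg hint ⟨k, hk⟩
      rw [hA' ⟨k, hk⟩]
      refine ⟨?_, fun t₀ ht₀ ↦ ?_⟩
      · rw [hW ⟨k, hk⟩]
        exact integral_max_const_le_goldenRatio_mul (hint _) (hβ0 _)
          ((le_integral_laterMax hmeas hnonneg hint hindep hWn hW _).trans (hEy _).le) ih.1 hαk hβk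
      have hmax := laterMax_eq_max hnonneg (t := t₀) (t' := ⟨k, hk⟩) ht₀.symm
      exact ⟨hXY.le_goldenRatio_mul_integral_thresholdPayoff (hmeas _) hyk (hint _) hyik
          (laterMax_nonneg hnonneg _) (hβ0 _) (hEy _) (hβ _) hαk hβk
          (by simpa only [hmax] using hEy t₀),
        hXY.le_integral_thresholdPayoff (hmeas _) hyk (hint _) hyik (hβ0 _) (hEy _) (hβ _) hβk
          (by simpa only [hmax] using hβ t₀)⟩
  rw [ge_iff_le, inv_mul_le_iff₀ Real.goldenRatio_pos]
  exact (key 0 n.zero_le).1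

/-- Theorem 3.1 (Main Result 1). Boxes are 0-indexed: `v 0, …, v (n-1)` are
independent, nonnegative, integrable random variables.
`y t ω = max_{s > t} v s ω` (the empty supremum in `ℝ` is `0`, so `y` of the
last box is `0`), `α t = φ⁻¹·E[y t]`, `β t ≥ 0` solves `E[(y t − φ·x)⁺] = x`,
and `τ t = max (α t) (β t)`. The order-unaware algorithm's value satisfies
`A n = 0` and `A t = E[v t · 1{v t ≥ τ t}] + Pr[v t < τ t] · A (t+1)`;
the optimal order-aware value satisfies `W n = 0` and
`W t = E[max (v t) (W (t+1))]`. Then `A 1 ≥ φ⁻¹ · W 1`, i.e. (0-indexed)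
`A 0 ≥ φ⁻¹ · W 0`, where `φ = (1+√5)/2` is the golden ratio. -/
theorem order_unaware_golden_ratio {Ω : Type*} [MeasurableSpace Ω]
    (μ : Measure Ω) [IsProbabilityMeasure μ]
    (n : ℕ) (hn : 1 ≤ n)
    (v : Fin n → Ω → ℝ)
    (hmeas : ∀ t, Measurable (v t))
    (hnonneg : ∀ t ω, 0 ≤ v t ω)
    (hint : ∀ t, Integrable (v t) μ)
    (hindep : iIndepFun v μ)
    (φ : ℝ) (hφ : φ = (1 + Real.sqrt 5) / 2)
    (y : Fin n → Ω → ℝ)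
    (hy : ∀ t ω, y t ω = ⨆ s : {s : Fin n // t < s}, v s ω)
    (α β τ : Fin n → ℝ)
    (hα : ∀ t, α t = φ⁻¹ * ∫ ω, y t ω ∂μ)
    (hβ0 : ∀ t, 0 ≤ β t)
    (hβ : ∀ t, (∫ ω, max (y t ω - φ * β t) 0 ∂μ) = β t)
    (hτ : ∀ t, τ t = max (α t) (β t))
    (A W : ℕ → ℝ)
    (hAn : A n = 0)
    (hA : ∀ t : Fin n, A t =
      (∫ ω, (if τ t ≤ v t ω then v t ω else 0) ∂μ)
        + (μ {ω | v t ω < τ t}).toReal * A ((t : ℕ) + 1))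
    (hWn : W n = 0)
    (hW : ∀ t : Fin n, W t = ∫ ω, max (v t ω) (W ((t : ℕ) + 1)) ∂μ) :
    A 0 ≥ φ⁻¹ * W 0 :=
  order_unaware_golden_ratio_general μ n v hmeas hnonneg hint hindep φ hφ y hy α β τ hα hβ0 hβ hτ A
    W hAn hA hWn hW
end

section
/- Let φ = (1+√5)/2. For every 1 ≤ t ≤ n−1, it holds that A_{t+1} ≥ β_t and β_t ≥ φ⁻²·E[y_t] (equivalently β_t ≥ φ⁻¹·α_t). (Lemma 3.2, the key lemma in the proof of the golden-ratio order competitive ratio.) -/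
/-!
Write `G t x = E[(y t - φ x)⁺]`: it is nonincreasing in `x` and `β t` is its fixed point, so
`β t ≤ x` as soon as `G t x ≤ x`. The bound `E[y t] - φ β t ≤ G t (β t) = β t` together with
`φ + 1 = φ²` gives `φ⁻² E[y t] ≤ β t`, hence also `τ t ≤ φ β t`.

For `x = A (t+1)` one argues by backward induction, writing `s = t + 1`. Since `A s` is at least
`E[(v s - τ s)⁺] + min (τ s) (A (s+1))`, and `β s ≤ min (τ s) (A (s+1))` (by induction and
`τ s ≥ β s`) while `τ s ≤ φ min (τ s) (A (s+1))`, we get `φ A s ≥ max (τ s) (φ β s)`. As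
`y t = max (v s) (y s)`, pointwise `(y t - φ A s)⁺ ≤ (v s - τ s)⁺ + (y s - φ β s)⁺`, and taking
expectations `G t (A s) ≤ E[(v s - τ s)⁺] + β s ≤ A s`.
-/

open MeasureTheory ProbabilityTheory Real

section

variable {Ω : Type*}

noncomputable def maxAfter {n : ℕ} (v : Fin n → Ω → ℝ) (t : Fin n) (ω : Ω) : ℝ :=
  ⨆ s : {s : Fin n // t < s}, v s ω

lemma le_maxAfter {n : ℕ} (v : Fin n → Ω → ℝ) {t s : Fin n} (hts : t < s) (ω : Ω) :
    v s ω ≤ maxAfter v t ω :=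
  le_ciSup (f := fun r : {r : Fin n // t < r} => v r ω) (Finite.bddAbove_range _) ⟨s, hts⟩

lemma maxAfter_last {m : ℕ} (v : Fin (m + 1) → Ω → ℝ) (ω : Ω) :
    maxAfter v (Fin.last m) ω = 0 := by
  have : IsEmpty {s : Fin (m + 1) // Fin.last m < s} := ⟨fun s => (Fin.le_last s.1).not_gt s.2⟩
  exact Real.iSup_of_isEmpty _

lemma maxAfter_castSucc {m : ℕ} {v : Fin (m + 1) → Ω → ℝ} (hv : ∀ s ω, 0 ≤ v s ω)
    (i : Fin m) (ω : Ω) :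
    maxAfter v i.castSucc ω = max (v i.succ ω) (maxAfter v i.succ ω) := by
  apply le_antisymm
  · refine Real.iSup_le (fun r => ?_) ((hv _ ω).trans (le_max_left _ _))
    rcases (Fin.castSucc_lt_iff_succ_le.1 r.2).eq_or_lt with h | h
    · rw [← h]; exact le_max_left _ _
    · exact le_max_of_le_right (le_maxAfter v h ω)
  · refine max_le (le_maxAfter v i.castSucc_lt_succ ω)
      (Real.iSup_le (fun r => le_maxAfter v (i.castSucc_lt_succ.trans r.2) ω) ?_)
    exact (hv _ ω).trans (le_maxAfter v i.castSucc_lt_succ ω)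

variable [MeasurableSpace Ω] {μ : Measure Ω}

lemma integrable_maxAfter {m : ℕ} {v : Fin (m + 1) → Ω → ℝ} (hv : ∀ s ω, 0 ≤ v s ω)
    (hvi : ∀ s, Integrable (v s) μ) (t : Fin (m + 1)) : Integrable (maxAfter v t) μ := by
  induction t using Fin.reverseInduction with
  | last => simp [funext (maxAfter_last v)]
  | cast i ih => rw [funext (maxAfter_castSucc hv i)]; exact (hvi _).sup ih

section PositivePart

variable [IsFiniteMeasure μ] {X : Ω → ℝ}

lemma MeasureTheory.Integrable.posPart_sub_const (hX : Integrable X μ) (c : ℝ) :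
    Integrable (fun ω => max (X ω - c) 0) μ :=
  (hX.sub (integrable_const c)).pos_part

lemma antitone_integral_posPart_sub (hX : Integrable X μ) :
    Antitone fun c => ∫ ω, max (X ω - c) 0 ∂μ :=
  fun _ _ hcc' => integral_mono (hX.posPart_sub_const _) (hX.posPart_sub_const _)
    fun _ => max_le_max (sub_le_sub_left hcc' _) le_rfl

lemma le_of_integral_posPart_sub_mul_le (hX : Integrable X μ) {c b x : ℝ} (hc : 0 ≤ c)
    (hb : ∫ ω, max (X ω - c * b) 0 ∂μ = b) (hx : ∫ ω, max (X ω - c * x) 0 ∂μ ≤ x) :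
    b ≤ x := by
  by_contra! hxb
  have := antitone_integral_posPart_sub hX (mul_le_mul_of_nonneg_left hxb.le hc)
  linarith

end PositivePart

lemma nonneg_of_integral_posPart_sub_eq {X : Ω → ℝ} {c b : ℝ}
    (hb : ∫ ω, max (X ω - c) 0 ∂μ = b) : 0 ≤ b :=
  hb ▸ integral_nonneg fun _ => le_max_right _ _

lemma integral_le_of_integral_posPart_sub_mul_eq [IsProbabilityMeasure μ] {X : Ω → ℝ}
    (hX : Integrable X μ) {c b : ℝ} (hb : ∫ ω, max (X ω - c * b) 0 ∂μ = b) :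
    ∫ ω, X ω ∂μ ≤ (c + 1) * b := by
  have h : ∫ ω, (X ω - c * b) ∂μ ≤ ∫ ω, max (X ω - c * b) 0 ∂μ :=
    integral_mono (hX.sub (integrable_const _)) (hX.posPart_sub_const _)
      fun ω => le_max_left _ _
  rw [hb, integral_sub hX (integrable_const _), integral_const, probReal_univ, one_smul] at h
  linarith

lemma integral_le_goldenRatio_sq_mul [IsProbabilityMeasure μ] {Y : Ω → ℝ} (hY : Integrable Y μ)
    {b : ℝ} (hb : ∫ ω, max (Y ω - goldenRatio * b) 0 ∂μ = b) :
    ∫ ω, Y ω ∂μ ≤ goldenRatio ^ 2 * b :=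
  goldenRatio_sq ▸ integral_le_of_integral_posPart_sub_mul_eq hY hb

lemma inv_goldenRatio_sq_mul_integral_le [IsProbabilityMeasure μ] {Y : Ω → ℝ}
    (hY : Integrable Y μ) {b : ℝ} (hb : ∫ ω, max (Y ω - goldenRatio * b) 0 ∂μ = b) :
    goldenRatio⁻¹ ^ 2 * ∫ ω, Y ω ∂μ ≤ b := by
  rw [inv_pow, inv_mul_le_iff₀ (by positivity)]
  exact integral_le_goldenRatio_sq_mul hY hb

lemma max_inv_goldenRatio_mul_integral_le [IsProbabilityMeasure μ] {Y : Ω → ℝ}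
    (hY : Integrable Y μ) {b : ℝ} (hb : ∫ ω, max (Y ω - goldenRatio * b) 0 ∂μ = b) :
    max (goldenRatio⁻¹ * ∫ ω, Y ω ∂μ) b ≤ goldenRatio * b := by
  refine max_le ?_ (le_mul_of_one_le_left (nonneg_of_integral_posPart_sub_eq hb)
    one_lt_goldenRatio.le)
  calc goldenRatio⁻¹ * ∫ ω, Y ω ∂μ ≤ goldenRatio⁻¹ * (goldenRatio ^ 2 * b) := by
        gcongr; exact integral_le_goldenRatio_sq_mul hY hb
    _ = goldenRatio * b := by field_simp

noncomputable def thresholdValue (μ : Measure Ω) (X : Ω → ℝ) (τ a : ℝ) : ℝ :=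
  ∫ ω, (if τ ≤ X ω then X ω else 0) ∂μ + μ.real {ω | X ω < τ} * a

section Threshold

variable [IsProbabilityMeasure μ] {X : Ω → ℝ}

lemma thresholdValue_eq (hX : Measurable X) (hXi : Integrable X μ) (τ a : ℝ) :
    thresholdValue μ X τ a =
      τ * μ.real {ω | τ ≤ X ω} + ∫ ω, max (X ω - τ) 0 ∂μ + μ.real {ω | X ω < τ} * a := by
  have hS : MeasurableSet {ω | τ ≤ X ω} := measurableSet_le measurable_const hX
  have hsplit : (fun ω => if τ ≤ X ω then X ω else 0) =
      fun ω => {ω | τ ≤ X ω}.indicator (fun _ => τ) ω + max (X ω - τ) 0 := by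
    ext ω
    by_cases h : τ ≤ X ω
    · simp [h]
    · simp [h, (not_le.1 h).le]
  rw [thresholdValue, hsplit, integral_add ((integrable_const τ).indicator hS)
    (hXi.posPart_sub_const τ), integral_indicator_const _ hS, smul_eq_mul, mul_comm]

lemma integral_posPart_sub_add_min_le_thresholdValue (hX : Measurable X)
    (hXi : Integrable X μ) (τ a : ℝ) :
    ∫ ω, max (X ω - τ) 0 ∂μ + min τ a ≤ thresholdValue μ X τ a := by
  have hpq : μ.real {ω | τ ≤ X ω} + μ.real {ω | X ω < τ} = 1 := by
    have := measureReal_add_measureReal_compl (μ := μ)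
      (measurableSet_le (measurable_const (a := τ)) hX)
    simpa [Set.compl_ofPred, not_le] using this
  have hp := mul_le_mul_of_nonneg_right (min_le_left τ a) (measureReal_nonneg (μ := μ)
    (s := {ω | τ ≤ X ω}))
  have hq := mul_le_mul_of_nonneg_right (min_le_right τ a) (measureReal_nonneg (μ := μ)
    (s := {ω | X ω < τ}))
  rw [thresholdValue_eq hX hXi]
  linear_combination hp + hq - min τ a * hpq

end Threshold

lemma integral_posPart_max_sub_mul_le_thresholdValue [IsProbabilityMeasure μ] {X Y : Ω → ℝ}
    (hX : Measurable X) (hXi : Integrable X μ) (hYi : Integrable Y μ) {c b τ a : ℝ}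
    (hc : 1 ≤ c) (hb : ∫ ω, max (Y ω - c * b) 0 ∂μ = b) (hbτ : b ≤ τ) (hτb : τ ≤ c * b)
    (hba : b ≤ a) :
    ∫ ω, max (max (X ω) (Y ω) - c * thresholdValue μ X τ a) 0 ∂μ ≤ thresholdValue μ X τ a := by
  set V := thresholdValue μ X τ a
  have hV := integral_posPart_sub_add_min_le_thresholdValue (μ := μ) hX hXi τ a
  have hb0 : 0 ≤ b := nonneg_of_integral_posPart_sub_eq hb
  have hE0 : 0 ≤ ∫ ω, max (X ω - τ) 0 ∂μ := integral_nonneg fun _ => le_max_right _ _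
  have hτm : τ ≤ c * min τ a := by
    -- `τ / c ≤ b ≤ a`
    rw [mul_min_of_nonneg _ _ (by linarith)]
    exact le_min (le_mul_of_one_le_left (hb0.trans hbτ) hc)
      (hτb.trans (mul_le_mul_of_nonneg_left hba (by linarith)))
  have hmV : c * min τ a ≤ c * V := by gcongr; linarith
  have hbV : c * b ≤ c * V := by gcongr; linarith [le_min hbτ hba]
  have hpt : ∀ ω, max (max (X ω) (Y ω) - c * V) 0 ≤ max (X ω - τ) 0 + max (Y ω - c * b) 0 := by
    intro ω
    refine max_le ?_ (add_nonneg (le_max_right _ _) (le_max_right _ _))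
    rw [sub_le_iff_le_add]
    apply max_le <;> linarith [le_max_left (X ω - τ) 0, le_max_right (X ω - τ) 0,
      le_max_left (Y ω - c * b) 0, le_max_right (Y ω - c * b) 0]
  calc ∫ ω, max (max (X ω) (Y ω) - c * V) 0 ∂μ
      ≤ ∫ ω, (max (X ω - τ) 0 + max (Y ω - c * b) 0) ∂μ :=
        integral_mono ((hXi.sup hYi).posPart_sub_const _)
          ((hXi.posPart_sub_const _).add (hYi.posPart_sub_const _)) hpt
    _ = ∫ ω, max (X ω - τ) 0 ∂μ + b := by
        rw [integral_add (hXi.posPart_sub_const _) (hYi.posPart_sub_const _), hb]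
    _ ≤ V := by linarith [le_min hbτ hba]

end

theorem key_lemma_alg_ge_beta_general {Ω : Type*} [MeasurableSpace Ω]
    (μ : Measure Ω) [IsProbabilityMeasure μ]
    (n : ℕ) (hn : 1 ≤ n)
    (v : Fin n → Ω → ℝ)
    (hmeas : ∀ t, Measurable (v t))
    (hnonneg : ∀ t ω, 0 ≤ v t ω)
    (hint : ∀ t, Integrable (v t) μ)
    (φ : ℝ) (hφ : φ = (1 + Real.sqrt 5) / 2)
    (y : Fin n → Ω → ℝ)
    (hy : ∀ t ω, y t ω = ⨆ s : {s : Fin n // t < s}, v s ω)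
    (α β τ : Fin n → ℝ)
    (hα : ∀ t, α t = φ⁻¹ * ∫ ω, y t ω ∂μ)
    (hβ : ∀ t, (∫ ω, max (y t ω - φ * β t) 0 ∂μ) = β t)
    (hτ : ∀ t, τ t = max (α t) (β t))
    (A : ℕ → ℝ)
    (hAn : A n = 0)
    (hA : ∀ t : Fin n, A t =
      (∫ ω, (if τ t ≤ v t ω then v t ω else 0) ∂μ)
        + (μ {ω | v t ω < τ t}).toReal * A ((t : ℕ) + 1)) :
    ∀ t : Fin n, (t : ℕ) + 1 < n →
      β t ≤ A ((t : ℕ) + 1) ∧ φ⁻¹ ^ 2 * (∫ ω, y t ω ∂μ) ≤ β t := by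
  obtain ⟨m, rfl⟩ := Nat.exists_eq_add_of_le' hn
  obtain rfl : φ = goldenRatio := hφ
  obtain rfl : y = maxAfter v := funext₂ hy
  have hAV : ∀ t : Fin (m + 1), A t = thresholdValue μ (v t) (τ t) (A ((t : ℕ) + 1)) := hA
  have hyi : ∀ t, Integrable (maxAfter v t) μ := integrable_maxAfter hnonneg hint
  have hτβ : ∀ t, τ t ≤ goldenRatio * β t := fun t =>
    hτ t ▸ hα t ▸ max_inv_goldenRatio_mul_integral_le (hyi t) (hβ t)
  have hβA : ∀ t : Fin (m + 1), β t ≤ A (t + 1) := by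
    intro t
    induction t using Fin.reverseInduction with
    | last =>
      refine le_of_integral_posPart_sub_mul_le (hyi _) goldenRatio_pos.le (hβ _) ?_
      simp [maxAfter_last, hAn]
    | cast i ih =>
      rw [Fin.val_castSucc, ← Fin.val_succ, hAV]
      refine le_of_integral_posPart_sub_mul_le (hyi _) goldenRatio_pos.le (hβ _) ?_
      simp only [maxAfter_castSucc hnonneg]
      exact integral_posPart_max_sub_mul_le_thresholdValue (hmeas _) (hint _) (hyi _)
        one_lt_goldenRatio.le (hβ _) (hτ _ ▸ le_max_right _ _) (hτβ _) ih
  exact fun t _ => ⟨hβA t, inv_goldenRatio_sq_mul_integral_le (hyi t) (hβ t)⟩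

/-- Lemma 3.2 (the key lemma). Boxes are 0-indexed: `v 0, …, v (n-1)` are
independent, nonnegative, integrable random variables.
`y t ω = max_{s > t} v s ω` (the empty supremum in `ℝ` is `0`),
`α t = φ⁻¹·E[y t]`, `β t ≥ 0` solves `E[(y t − φ·x)⁺] = x`, and
`τ t = max (α t) (β t)`. The order-unaware algorithm's value satisfies
`A n = 0` and `A t = E[v t · 1{v t ≥ τ t}] + Pr[v t < τ t] · A (t+1)`.
Then for every `1 ≤ t ≤ n−1` (0-indexed: every `t` with `t + 1 < n`),
`A (t+1) ≥ β t` and `β t ≥ φ⁻²·E[y t]` (equivalently `β t ≥ φ⁻¹·α t`),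
where `φ = (1+√5)/2` is the golden ratio. -/
theorem key_lemma_alg_ge_beta {Ω : Type*} [MeasurableSpace Ω]
    (μ : Measure Ω) [IsProbabilityMeasure μ]
    (n : ℕ) (hn : 1 ≤ n)
    (v : Fin n → Ω → ℝ)
    (hmeas : ∀ t, Measurable (v t))
    (hnonneg : ∀ t ω, 0 ≤ v t ω)
    (hint : ∀ t, Integrable (v t) μ)
    (hindep : iIndepFun v μ)
    (φ : ℝ) (hφ : φ = (1 + Real.sqrt 5) / 2)
    (y : Fin n → Ω → ℝ)
    (hy : ∀ t ω, y t ω = ⨆ s : {s : Fin n // t < s}, v s ω)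
    (α β τ : Fin n → ℝ)
    (hα : ∀ t, α t = φ⁻¹ * ∫ ω, y t ω ∂μ)
    (hβ0 : ∀ t, 0 ≤ β t)
    (hβ : ∀ t, (∫ ω, max (y t ω - φ * β t) 0 ∂μ) = β t)
    (hτ : ∀ t, τ t = max (α t) (β t))
    (A : ℕ → ℝ)
    (hAn : A n = 0)
    (hA : ∀ t : Fin n, A t =
      (∫ ω, (if τ t ≤ v t ω then v t ω else 0) ∂μ)
        + (μ {ω | v t ω < τ t}).toReal * A ((t : ℕ) + 1)) :
    ∀ t : Fin n, (t : ℕ) + 1 < n →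
      β t ≤ A ((t : ℕ) + 1) ∧ φ⁻¹ ^ 2 * (∫ ω, y t ω ∂μ) ≤ β t :=
  key_lemma_alg_ge_beta_general μ n hn v hmeas hnonneg hint φ hφ y hy α β τ hα hβ hτ A hAn hA
end

section
/- There exists a unique real number λ ∈ (0,1) satisfying λ/(1−λ) = ln(1/λ). (Well-definedness of the constant λ ≈ 0.4464 used by the max-probability algorithm; note ln(1/λ) ≈ 0.806.) -/
/-!
The equation `λ / (1 - λ) = ln (1 / λ)` says that `g λ = 0` for `g x = x / (1 - x) + ln x`.
On `(0, 1)` the function `g` is continuous and strictly increasing, being a sum of two strictly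
increasing functions, and `g (1/4) = 1/3 - 2 ln 2 < 0 < 1 - ln 2 = g (1/2)`; the intermediate value
theorem gives a root and strict monotonicity makes it unique.
-/

open Real Set

theorem strictMonoOn_div_one_sub : StrictMonoOn (fun x : ℝ => x / (1 - x)) (Iio 1) := by
  intro x hx y hy hxy
  have hx' : 0 < 1 - x := sub_pos.mpr hx
  have hy' : 0 < 1 - y := sub_pos.mpr hy
  simp only
  rw [div_lt_div_iff₀ hx' hy']
  nlinarith

noncomputable def lambdaDefect (x : ℝ) : ℝ := x / (1 - x) + log x

theorem strictMonoOn_lambdaDefect : StrictMonoOn lambdaDefect (Ioo 0 1) :=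
  (strictMonoOn_div_one_sub.mono fun _ hx => hx.2).add
    (strictMonoOn_log.mono fun _ hx => hx.1)

theorem continuousOn_lambdaDefect : ContinuousOn lambdaDefect (Ioo 0 1) := by
  unfold lambdaDefect
  fun_prop (disch := grind)

theorem lambdaDefect_one_fourth_neg : lambdaDefect (1 / 4) < 0 := by
  have hlog : log (1 / 4 : ℝ) = -(2 * log 2) := by
    rw [one_div, log_inv, show (4 : ℝ) = 2 ^ 2 by norm_num, log_pow, Nat.cast_ofNat]
  rw [lambdaDefect, hlog]
  linarith [log_two_gt_d9]

theorem lambdaDefect_one_half_pos : 0 < lambdaDefect (1 / 2) := by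
  rw [lambdaDefect, one_div, log_inv]
  linarith [log_two_lt_d9]

theorem lambdaDefect_eq_zero_iff {x : ℝ} :
    lambdaDefect x = 0 ↔ x / (1 - x) = log (1 / x) := by
  rw [lambdaDefect, one_div, log_inv, add_eq_zero_iff_eq_neg]

theorem exists_lambdaDefect_eq_zero : ∃ x ∈ Ioo (0 : ℝ) 1, lambdaDefect x = 0 := by
  have hsub : Icc (1 / 4 : ℝ) (1 / 2) ⊆ Ioo 0 1 :=
    Icc_subset_Ioo (by norm_num) (by norm_num)
  obtain ⟨x, hx, hx0⟩ := intermediate_value_Icc (by norm_num) (continuousOn_lambdaDefect.mono hsub)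
    ⟨lambdaDefect_one_fourth_neg.le, lambdaDefect_one_half_pos.le⟩
  exact ⟨x, hsub hx, hx0⟩

/-- There exists a unique real `λ ∈ (0,1)` with `λ/(1−λ) = ln(1/λ)`. -/
theorem existsUnique_lambda :
    ∃! l : ℝ, l ∈ Set.Ioo (0 : ℝ) 1 ∧ l / (1 - l) = Real.log (1 / l) := by
  obtain ⟨x, hx, hx0⟩ := exists_lambdaDefect_eq_zero
  refine ⟨x, ⟨hx, lambdaDefect_eq_zero_iff.mp hx0⟩, fun y ⟨hy, hy0⟩ => ?_⟩
  exact strictMonoOn_lambdaDefect.injOn hy hx (by rw [lambdaDefect_eq_zero_iff.mpr hy0, hx0])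
end

section
/- Let T be a finite index set, let S ⊆ T, let p_k ∈ [0,1) for each k ∈ T, and let λ ∈ (0,1). If ∏_{s ∈ S} (1 − p_s) ≤ λ, then Σ_{s ∈ S} p_s · ∏_{k ∈ T, k ≠ s} (1 − p_k) ≥ ln(1/λ) · ∏_{k ∈ T} (1 − p_k). (The key computation in Case 4 of the proof of Theorem 4.1: the probability that exactly one of the boxes indexed by S beats the current maximum, and no other box does, is at least ln(1/λ) times the probability that no box beats it.) -/
/-!
Dividing by `∏_{k ∈ T} (1 - p_k)`, the claim becomes `ln(1/λ) ≤ Σ_{s ∈ S} p_s / (1 - p_s)`.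
Since `ln(1/λ) ≤ -ln ∏_{s ∈ S} (1 - p_s) = Σ_{s ∈ S} ln(1 / (1 - p_s))`, it suffices to apply
`ln x ≤ x - 1` to each `x = 1 / (1 - p_s)`.
-/

open Finset

theorem Real.neg_log_one_sub_le_div {q : ℝ} (hq : q < 1) : -Real.log (1 - q) ≤ q / (1 - q) := by
  have hpos : 0 < 1 - q := sub_pos.mpr hq
  calc -Real.log (1 - q) = Real.log (1 - q)⁻¹ := (Real.log_inv _).symm
    _ ≤ (1 - q)⁻¹ - 1 := Real.log_le_sub_one_of_pos (inv_pos.mpr hpos)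
    _ = q / (1 - q) := by field_simp; ring

theorem Finset.sum_mul_prod_erase_eq_sum_div_mul_prod {ι K : Type*} [DecidableEq ι] [Field K]
    {S T : Finset ι} (hST : S ⊆ T) (f g : ι → K) (hg : ∀ s ∈ S, g s ≠ 0) :
    ∑ s ∈ S, f s * ∏ k ∈ T.erase s, g k = (∑ s ∈ S, f s / g s) * ∏ k ∈ T, g k := by
  rw [sum_mul]
  refine sum_congr rfl fun s hs => ?_
  rw [← mul_prod_erase T g (hST hs)]
  field_simp [hg s hs]

theorem Real.neg_log_prod_one_sub_le_sum_div {ι : Type*} {S : Finset ι} {p : ι → ℝ}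
    (hp : ∀ s ∈ S, p s < 1) :
    -Real.log (∏ s ∈ S, (1 - p s)) ≤ ∑ s ∈ S, p s / (1 - p s) := by
  rw [Real.log_prod fun s hs => (sub_pos.mpr (hp s hs)).ne', ← sum_neg_distrib]
  exact sum_le_sum fun s hs => Real.neg_log_one_sub_le_div (hp s hs)

theorem exactly_one_beats_ge_general {ι : Type*} [DecidableEq ι] (T S : Finset ι) (hST : S ⊆ T)
    (p : ι → ℝ) (hp : ∀ k ∈ T, p k ∈ Set.Ico (0 : ℝ) 1)
    (lam : ℝ)
    (hprod : ∏ s ∈ S, (1 - p s) ≤ lam) :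
    Real.log (1 / lam) * ∏ k ∈ T, (1 - p k)
      ≤ ∑ s ∈ S, p s * ∏ k ∈ T.erase s, (1 - p k) := by
  have hpS : ∀ s ∈ S, p s < 1 := fun s hs => (hp s (hST hs)).2
  have hprodS_pos : 0 < ∏ s ∈ S, (1 - p s) := prod_pos fun s hs => sub_pos.mpr (hpS s hs)
  have hprodT_nonneg : 0 ≤ ∏ k ∈ T, (1 - p k) :=
    prod_nonneg fun k hk => (sub_pos.mpr (hp k hk).2).le
  rw [sum_mul_prod_erase_eq_sum_div_mul_prod hST _ _ fun s hs => (sub_pos.mpr (hpS s hs)).ne']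
  refine mul_le_mul_of_nonneg_right ?_ hprodT_nonneg
  calc Real.log (1 / lam) = -Real.log lam := by rw [one_div, Real.log_inv]
    _ ≤ -Real.log (∏ s ∈ S, (1 - p s)) := neg_le_neg (Real.log_le_log hprodS_pos hprod)
    _ ≤ ∑ s ∈ S, p s / (1 - p s) := Real.neg_log_prod_one_sub_le_sum_div hpS

/-- Key computation in Case 4 of the proof of Theorem 4.1: if `S ⊆ T` are
finite index sets, `p k ∈ [0,1)` for each `k ∈ T`, `λ ∈ (0,1)` and
`∏_{s ∈ S} (1 − p_s) ≤ λ`, then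
`Σ_{s ∈ S} p_s · ∏_{k ∈ T, k ≠ s} (1 − p_k) ≥ ln(1/λ) · ∏_{k ∈ T} (1 − p_k)`. -/
theorem exactly_one_beats_ge {ι : Type*} [DecidableEq ι] (T S : Finset ι) (hST : S ⊆ T)
    (p : ι → ℝ) (hp : ∀ k ∈ T, p k ∈ Set.Ico (0 : ℝ) 1)
    (lam : ℝ) (hlam : lam ∈ Set.Ioo (0 : ℝ) 1)
    (hprod : ∏ s ∈ S, (1 - p s) ≤ lam) :
    Real.log (1 / lam) * ∏ k ∈ T, (1 - p k)
      ≤ ∑ s ∈ S, p s * ∏ k ∈ T.erase s, (1 - p k) :=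
  exactly_one_beats_ge_general T S hST p hp lam hprod
end

section
/- For every θ ∈ ℝ, A_1(θ) ≥ ln(1/λ) · W_1(θ). In words: for every arrival order and every initial threshold θ, the adaptive order-unaware algorithm catches the box of maximum value exceeding θ with probability at least ln(1/λ) ≈ 0.806 times the winning probability of the best order-aware online algorithm (Theorem 4.1, Main Result 2). -/
/-!
Backward induction on `t` (`CatchInvariant`, with `g = G_t`, `a = A_t`, `w = W_t`): besides
`W_t ≤ 1 - G_t`, the algorithm's value satisfies `A_t(θ) ≥ φ(G_t(θ))`, where `φ(x) = ln(1/λ)·x`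
for `x ≤ λ` and `φ(x) = x·ln(1/x)` for `x ≥ λ` (the two branches agree at `λ`), and
`A_t ≥ ln(1/λ)·W_t`.

Independence splits `G_t(θ) = F·G_{t+1}(θ)` with `F = Pr[v_t < θ]`. Below `θ` nothing changes;
above `θ` (almost surely strictly above, `v_t` being atomless) the algorithm accepts as soon as
`G_{t+1}(θ) > λ`, so `A_t(θ) ≥ F·A_{t+1}(θ) + (1-F)·G_{t+1}(θ)`, and the `φ`-bound propagates by
`F·ln(1/F) ≤ 1 - F` and `λ(1 + ln(g/λ)) ≤ g`. The comparison with `W` is pointwise in `v_t`: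
when the algorithm accepts, `G_{t+1}(v_t) ≥ λ` while `ln(1/λ)·W_{t+1} ≤ ln(1/λ)(1-λ) = λ`; this is
where the defining equation of `λ` enters.
-/

open MeasureTheory ProbabilityTheory Real Set

lemma log_one_div_mul_one_sub_eq {lam : ℝ} (hlam : lam ∈ Ioo 0 1)
    (hlam_eq : lam / (1 - lam) = log (1 / lam)) : log (1 / lam) * (1 - lam) = lam := by
  rw [← hlam_eq, div_mul_cancel₀ _ (sub_ne_zero.2 hlam.2.ne')]

lemma log_one_div_le_one {lam : ℝ} (hlam : lam ∈ Ioo 0 1)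
    (hlam_eq : lam / (1 - lam) = log (1 / lam)) : log (1 / lam) ≤ 1 := by
  obtain ⟨h0, h1⟩ := hlam
  have hc0 : 0 ≤ log (1 / lam) := log_nonneg (one_le_one_div h0 h1.le)
  have hle : log (1 / lam) ≤ (1 - lam) / lam := by
    calc log (1 / lam) ≤ 1 / lam - 1 := log_le_sub_one_of_pos (one_div_pos.2 h0)
      _ = (1 - lam) / lam := by field_simp
  have hsq : log (1 / lam) * log (1 / lam) ≤ 1 :=
    calc log (1 / lam) * log (1 / lam) = lam / (1 - lam) * log (1 / lam) := by rw [hlam_eq]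
      _ ≤ lam / (1 - lam) * ((1 - lam) / lam) := by gcongr
      _ = 1 := by field_simp
  nlinarith

lemma negMulLog_mul_le {F g : ℝ} (hF : 0 ≤ F) (hg : 0 ≤ g) :
    negMulLog (F * g) ≤ F * negMulLog g + (1 - F) * g := by
  rw [negMulLog_mul]
  linarith [mul_le_mul_of_nonneg_left (negMulLog_le_one_sub_self hF) hg]

lemma log_one_div_mul_mul_le {lam F g : ℝ} (hlam : 0 < lam) (hF : 0 ≤ F)
    (hFg : F * g ≤ lam) (hg : lam < g) :
    log (1 / lam) * (F * g) ≤ F * negMulLog g + (1 - F) * g := by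
  have hg0 : 0 < g := hlam.trans hg
  have key : F * (1 + log (1 / lam) + log g) ≤ 1 := by
    rcases le_or_gt (1 + log (1 / lam) + log g) 0 with hneg | hpos
    · nlinarith
    have hconc : lam * (1 + log (1 / lam) + log g) ≤ g :=
      calc lam * (1 + log (1 / lam) + log g) = lam * (1 + log (g / lam)) := by
            rw [log_div hg0.ne' hlam.ne', one_div, log_inv]; ring
        _ ≤ lam * (g / lam) := by gcongr; linarith [log_le_sub_one_of_pos (div_pos hg0 hlam)]
        _ = g := mul_div_cancel₀ _ hlam.ne'
    refine le_of_mul_le_mul_right ?_ hg0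
    nlinarith
  rw [negMulLog]
  nlinarith [mul_le_mul_of_nonneg_left key hg0.le]

section Threshold

variable {Ω : Type*} [MeasurableSpace Ω] {μ : Measure Ω} [IsProbabilityMeasure μ]
  {X : Ω → ℝ} {θ α β : ℝ} {f : Ω → ℝ}

lemma integrable_ite_lt (hX : Measurable X) :
    Integrable (fun ω => if X ω < θ then α else β) μ := by
  change Integrable ({ω | X ω < θ}.piecewise (fun _ => α) (fun _ => β)) μ
  exact Integrable.piecewise (hX measurableSet_Iio) (integrable_const α).integrableOn
    (integrable_const β).integrableOn

lemma integral_ite_lt (hX : Measurable X) :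
    ∫ ω, (if X ω < θ then α else β) ∂μ
      = μ.real {ω | X ω < θ} * α + (1 - μ.real {ω | X ω < θ}) * β := by
  have hs : MeasurableSet {ω | X ω < θ} := hX measurableSet_Iio
  change ∫ ω, {ω | X ω < θ}.piecewise (fun _ => α) (fun _ => β) ω ∂μ = _
  rw [integral_piecewise hs (integrable_const _).integrableOn (integrable_const _).integrableOn,
    setIntegral_const, setIntegral_const, probReal_compl_eq_one_sub hs, smul_eq_mul, smul_eq_mul]

lemma mul_add_mul_le_integral (hX : Measurable X) (hθ : μ {ω | X ω = θ} = 0)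
    (hf : Integrable f μ) (hα : ∀ ω, X ω < θ → α ≤ f ω) (hβ : ∀ ω, θ < X ω → β ≤ f ω) :
    μ.real {ω | X ω < θ} * α + (1 - μ.real {ω | X ω < θ}) * β ≤ ∫ ω, f ω ∂μ := by
  rw [← integral_ite_lt hX]
  refine integral_mono_ae (integrable_ite_lt hX) hf ?_
  filter_upwards [measure_eq_zero_iff_ae_notMem.1 hθ] with ω hω
  rcases lt_or_gt_of_ne (show X ω ≠ θ from hω) with h | h
  · simpa [h] using hα ω h
  · simpa [h.not_gt] using hβ ω h

lemma integral_le_mul_add_mul (hX : Measurable X) (hf0 : ∀ ω, 0 ≤ f ω)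
    (hα : ∀ ω, X ω < θ → f ω ≤ α) (hβ : ∀ ω, θ ≤ X ω → f ω ≤ β) :
    ∫ ω, f ω ∂μ ≤ μ.real {ω | X ω < θ} * α + (1 - μ.real {ω | X ω < θ}) * β := by
  rw [← integral_ite_lt hX]
  refine integral_mono_of_nonneg (ae_of_all _ hf0) (integrable_ite_lt hX) (ae_of_all _ fun ω => ?_)
  dsimp only
  split_ifs with h
  exacts [hα ω h, hβ ω (not_lt.1 h)]

end Threshold

-- The integrands of the recursions for `A_t` and `W_t`, with `g = G_{t+1}`, `a = A_{t+1}`,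
-- `w = W_{t+1}` and `x = v_t`.
noncomputable def unawarePayoff (lam : ℝ) (g a : ℝ → ℝ) (θ x : ℝ) : ℝ :=
  if θ < x ∧ lam ≤ g x then g x else a (max θ x)

noncomputable def awarePayoff (g w : ℝ → ℝ) (θ x : ℝ) : ℝ :=
  max (if θ < x then g x else 0) (w (max θ x))

section Payoff

variable {lam θ x : ℝ} {g a w : ℝ → ℝ}

lemma unawarePayoff_of_le (h : x ≤ θ) : unawarePayoff lam g a θ x = a θ := by
  rw [unawarePayoff, if_neg (fun h' => h'.1.not_ge h), max_eq_left h]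

lemma unawarePayoff_of_lt (h : θ < x) (hx : lam ≤ g x) : unawarePayoff lam g a θ x = g x :=
  if_pos ⟨h, hx⟩

lemma unawarePayoff_nonneg (hg0 : ∀ x, 0 ≤ g x) (ha0 : ∀ x, 0 ≤ a x) :
    0 ≤ unawarePayoff lam g a θ x := by
  unfold unawarePayoff; split_ifs
  exacts [hg0 _, ha0 _]

lemma unawarePayoff_le_one (hg1 : ∀ x, g x ≤ 1) (ha1 : ∀ x, a x ≤ 1) :
    unawarePayoff lam g a θ x ≤ 1 := by
  unfold unawarePayoff; split_ifs
  exacts [hg1 _, ha1 _]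

lemma measurable_unawarePayoff (hg : Measurable g) (ha : Measurable a) :
    Measurable fun p : ℝ × ℝ => unawarePayoff lam g a p.1 p.2 := by
  refine Measurable.ite ?_ (hg.comp measurable_snd) (ha.comp (measurable_fst.max measurable_snd))
  rw [ofPred_and]
  exact (measurableSet_lt measurable_fst measurable_snd).inter
    (hg.comp measurable_snd measurableSet_Ici)

lemma awarePayoff_nonneg (hg0 : ∀ x, 0 ≤ g x) : 0 ≤ awarePayoff g w θ x := by
  refine le_max_of_le_left ?_
  split_ifs
  exacts [hg0 x, le_rfl]

end Payoff

structure CatchInvariant (lam : ℝ) (g a w : ℝ → ℝ) : Prop where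
  measurable : Measurable a
  nonneg : ∀ θ, 0 ≤ a θ
  le_one : ∀ θ, a θ ≤ 1
  aware_le : ∀ θ, w θ ≤ 1 - g θ
  low : ∀ θ, g θ ≤ lam → log (1 / lam) * g θ ≤ a θ
  high : ∀ θ, lam ≤ g θ → negMulLog (g θ) ≤ a θ
  mul_aware_le : ∀ θ, log (1 / lam) * w θ ≤ a θ

namespace CatchInvariant

variable {lam : ℝ} {g a w : ℝ → ℝ}

lemma terminal (hlam : lam < 1) : CatchInvariant lam (fun _ => 1) (fun _ => 0) (fun _ => 0) where
  measurable := measurable_const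
  nonneg _ := le_rfl
  le_one _ := zero_le_one
  aware_le _ := by norm_num
  low _ h := absurd h (not_le.2 hlam)
  high _ _ := by simp
  mul_aware_le _ := by simp

lemma mul_awarePayoff_le (h : CatchInvariant lam g a w) (hlam : lam ∈ Ioo 0 1)
    (hlam_eq : lam / (1 - lam) = log (1 / lam)) (θ x : ℝ) :
    log (1 / lam) * awarePayoff g w θ x ≤ unawarePayoff lam g a θ x := by
  have hc0 : 0 ≤ log (1 / lam) := log_nonneg (one_le_one_div hlam.1 hlam.2.le)
  rw [awarePayoff, mul_max_of_nonneg _ _ hc0]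
  rcases le_or_gt x θ with hx | hx
  · rw [unawarePayoff_of_le hx, if_neg hx.not_gt, max_eq_left hx, mul_zero]
    exact max_le (h.nonneg θ) (h.mul_aware_le θ)
  rw [if_pos hx, max_eq_right hx.le]
  rcases le_or_gt lam (g x) with hgx | hgx
  · rw [unawarePayoff_of_lt hx hgx]
    refine max_le
      (mul_le_of_le_one_left (hlam.1.le.trans hgx) (log_one_div_le_one hlam hlam_eq)) ?_
    calc log (1 / lam) * w x ≤ log (1 / lam) * (1 - lam) := by gcongr; linarith [h.aware_le x]
      _ = lam := log_one_div_mul_one_sub_eq hlam hlam_eq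
      _ ≤ g x := hgx
  · rw [unawarePayoff, if_neg (fun h' => hgx.not_ge h'.2), max_eq_right hx.le]
    exact max_le (h.low x hgx.le) (h.mul_aware_le x)

end CatchInvariant

section Step

variable {Ω : Type*} [MeasurableSpace Ω] {μ : Measure Ω} [IsProbabilityMeasure μ]
  {X : Ω → ℝ} {lam θ : ℝ} {g a w : ℝ → ℝ}

lemma measurable_integral_unawarePayoff (hX : Measurable X) (hg : Measurable g)
    (ha : Measurable a) : Measurable fun θ => ∫ ω, unawarePayoff lam g a θ (X ω) ∂μ :=
  ((measurable_unawarePayoff hg ha).comp (measurable_fst.prodMk (hX.comp measurable_snd)))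
    |>.stronglyMeasurable.integral_prod_right'.measurable

lemma integrable_unawarePayoff (hX : Measurable X) (hg : Measurable g) (ha : Measurable a)
    (hg0 : ∀ x, 0 ≤ g x) (hg1 : ∀ x, g x ≤ 1) (ha0 : ∀ x, 0 ≤ a x) (ha1 : ∀ x, a x ≤ 1) :
    Integrable (fun ω => unawarePayoff lam g a θ (X ω)) μ := by
  refine Integrable.of_bound ((measurable_unawarePayoff hg ha).comp
    (measurable_const.prodMk hX)).aestronglyMeasurable 1 (ae_of_all _ fun ω => ?_)
  rw [Real.norm_eq_abs, abs_le]
  exact ⟨by linarith [unawarePayoff_nonneg (lam := lam) (θ := θ) (x := X ω) hg0 ha0],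
    unawarePayoff_le_one hg1 ha1⟩

lemma integral_awarePayoff_le (hX : Measurable X) (hg0 : ∀ x, 0 ≤ g x) (hg1 : ∀ x, g x ≤ 1)
    (hw : ∀ x, w x ≤ 1 - g x) :
    ∫ ω, awarePayoff g w θ (X ω) ∂μ ≤ 1 - μ.real {ω | X ω < θ} * g θ := by
  calc ∫ ω, awarePayoff g w θ (X ω) ∂μ
      ≤ μ.real {ω | X ω < θ} * (1 - g θ) + (1 - μ.real {ω | X ω < θ}) * 1 := by
        refine integral_le_mul_add_mul hX (fun ω => awarePayoff_nonneg hg0) (fun ω h => ?_)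
          (fun ω _ => max_le (by split_ifs; exacts [hg1 _, zero_le_one]) ?_)
        · rw [awarePayoff, if_neg h.not_gt, max_eq_left h.le]
          exact max_le (by linarith [hg1 θ]) (hw θ)
        · linarith [hw (max θ (X ω)), hg0 (max θ (X ω))]
    _ = 1 - μ.real {ω | X ω < θ} * g θ := by ring

lemma mul_le_integral_unawarePayoff (hX : Measurable X) (hXθ : μ {ω | X ω = θ} = 0)
    (hint : Integrable (fun ω => unawarePayoff lam g a θ (X ω)) μ)
    (hg0 : ∀ x, 0 ≤ g x) (ha0 : ∀ x, 0 ≤ a x) :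
    μ.real {ω | X ω < θ} * a θ ≤ ∫ ω, unawarePayoff lam g a θ (X ω) ∂μ := by
  simpa using mul_add_mul_le_integral (β := 0) hX hXθ hint
    (fun ω h => (unawarePayoff_of_le h.le).ge) (fun ω _ => unawarePayoff_nonneg hg0 ha0)

lemma mul_add_mul_le_integral_unawarePayoff (hX : Measurable X) (hXθ : μ {ω | X ω = θ} = 0)
    (hint : Integrable (fun ω => unawarePayoff lam g a θ (X ω)) μ) (hg : Monotone g)
    (hθ : lam < g θ) :
    μ.real {ω | X ω < θ} * a θ + (1 - μ.real {ω | X ω < θ}) * g θ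
      ≤ ∫ ω, unawarePayoff lam g a θ (X ω) ∂μ := by
  refine mul_add_mul_le_integral hX hXθ hint (fun ω h => (unawarePayoff_of_le h.le).ge)
    fun ω h => ?_
  rw [unawarePayoff_of_lt h (hθ.le.trans (hg h.le))]
  exact hg h.le

theorem CatchInvariant.step (h : CatchInvariant lam g a w) (hlam : lam ∈ Ioo 0 1)
    (hlam_eq : lam / (1 - lam) = log (1 / lam)) (hX : Measurable X)
    (hXatom : ∀ x, μ {ω | X ω = x} = 0) (hg : Monotone g) (hg0 : ∀ x, 0 ≤ g x)
    (hg1 : ∀ x, g x ≤ 1) :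
    CatchInvariant lam (fun θ => μ.real {ω | X ω < θ} * g θ)
      (fun θ => ∫ ω, unawarePayoff lam g a θ (X ω) ∂μ)
      (fun θ => ∫ ω, awarePayoff g w θ (X ω) ∂μ) := by
  set F : ℝ → ℝ := fun θ => μ.real {ω | X ω < θ}
  have hF0 (θ : ℝ) : 0 ≤ F θ := measureReal_nonneg
  have hF1 (θ : ℝ) : F θ ≤ 1 := measureReal_le_one
  have hint (θ : ℝ) := integrable_unawarePayoff (μ := μ) (lam := lam) (θ := θ) hX
    hg.measurable h.measurable hg0 hg1 h.nonneg h.le_one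
  have above (θ : ℝ) (hθ : lam < g θ) :
      F θ * negMulLog (g θ) + (1 - F θ) * g θ ≤ ∫ ω, unawarePayoff lam g a θ (X ω) ∂μ := by
    refine le_trans ?_ (mul_add_mul_le_integral_unawarePayoff hX (hXatom θ) (hint θ) hg hθ)
    gcongr
    exact h.high θ hθ.le
  have low (θ : ℝ) (hθ : F θ * g θ ≤ lam) :
      log (1 / lam) * (F θ * g θ) ≤ ∫ ω, unawarePayoff lam g a θ (X ω) ∂μ := by
    rcases le_or_gt (g θ) lam with hgθ | hgθ
    · calc log (1 / lam) * (F θ * g θ) = F θ * (log (1 / lam) * g θ) := by ring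
        _ ≤ F θ * a θ := by gcongr; exact h.low θ hgθ
        _ ≤ _ := mul_le_integral_unawarePayoff hX (hXatom θ) (hint θ) hg0 h.nonneg
    · exact (log_one_div_mul_mul_le hlam.1 (hF0 θ) hθ hgθ).trans (above θ hgθ)
  refine ⟨measurable_integral_unawarePayoff hX hg.measurable h.measurable,
    fun θ => integral_nonneg fun ω => unawarePayoff_nonneg hg0 h.nonneg,
    fun θ => ?_, fun θ => integral_awarePayoff_le hX hg0 hg1 h.aware_le, low,
    fun θ hθ => ?_, fun θ => ?_⟩
  · calc ∫ ω, unawarePayoff lam g a θ (X ω) ∂μ ≤ ∫ _, (1 : ℝ) ∂μ :=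
          integral_mono (hint θ) (integrable_const 1) fun ω => unawarePayoff_le_one hg1 h.le_one
      _ = 1 := by simp
  · rcases le_or_gt (g θ) lam with hgθ | hgθ
    · -- here `F θ * g θ = lam`, where the two branches of `φ` agree
      have hFg : F θ * g θ = lam :=
        le_antisymm ((mul_le_of_le_one_left (hg0 θ) (hF1 θ)).trans hgθ) hθ
      calc negMulLog (F θ * g θ) = log (1 / lam) * (F θ * g θ) := by
            rw [hFg, negMulLog, one_div, log_inv]; ring
        _ ≤ _ := low θ hFg.le
    · exact (negMulLog_mul_le (hF0 θ) (hg0 θ)).trans (above θ hgθ)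
  · rw [← integral_const_mul]
    exact integral_mono_of_nonneg
      (ae_of_all _ fun ω => mul_nonneg (log_nonneg (one_le_one_div hlam.1 hlam.2.le))
        (awarePayoff_nonneg hg0))
      (hint θ) (ae_of_all _ fun ω => h.mul_awarePayoff_le hlam hlam_eq θ (X ω))

end Step

section AllBelow

variable {Ω : Type*} [MeasurableSpace Ω] {μ : Measure Ω} {n : ℕ} {v : Fin n → Ω → ℝ}

noncomputable def probAllBelow (μ : Measure Ω) (v : Fin n → Ω → ℝ) (t : ℕ) (θ : ℝ) : ℝ :=
  μ.real {ω | ∀ s : Fin n, t ≤ (s : ℕ) → v s ω < θ}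

lemma monotone_probAllBelow [IsFiniteMeasure μ] (t : ℕ) : Monotone (probAllBelow μ v t) :=
  fun _ _ hθ => measureReal_mono fun _ hω s hs => (hω s hs).trans_le hθ

lemma probAllBelow_self [IsProbabilityMeasure μ] (θ : ℝ) : probAllBelow μ v n θ = 1 := by
  simp [probAllBelow, fun s : Fin n => s.isLt.not_ge]

lemma probAllBelow_eq_mul (hindep : iIndepFun v μ) {t : ℕ} (ht : t < n) (θ : ℝ) :
    probAllBelow μ v t θ = μ.real {ω | v ⟨t, ht⟩ ω < θ} * probAllBelow μ v (t + 1) θ := by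
  have hprod (k : ℕ) : μ {ω | ∀ s : Fin n, k ≤ (s : ℕ) → v s ω < θ}
      = ∏ s ∈ Finset.univ.filter (fun s : Fin n => k ≤ s), μ (v s ⁻¹' Iio θ) := by
    rw [← hindep.meas_biInter fun s _ => ⟨Iio θ, measurableSet_Iio, rfl⟩]
    congr 1
    ext ω
    simp
  have hfilter : Finset.univ.filter (fun s : Fin n => t ≤ s)
      = insert ⟨t, ht⟩ (Finset.univ.filter fun s : Fin n => t + 1 ≤ s) := by
    ext s
    simp only [Finset.mem_filter, Finset.mem_univ, true_and, Finset.mem_insert, Fin.ext_iff]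
    omega
  simp only [probAllBelow, measureReal_def]
  rw [hprod, hprod, hfilter,
    Finset.prod_insert (by simp), ENNReal.toReal_mul]
  rfl

end AllBelow

theorem order_unaware_catch_max_general {Ω : Type*} [MeasurableSpace Ω]
    (μ : Measure Ω) [IsProbabilityMeasure μ]
    (n : ℕ)
    (v : Fin n → Ω → ℝ)
    (hmeas : ∀ t, Measurable (v t))
    (hindep : iIndepFun v μ)
    (hatomless : ∀ t (x : ℝ), μ {ω | v t ω = x} = 0)
    (lam : ℝ) (hlam : lam ∈ Set.Ioo (0 : ℝ) 1)
    (hlam_eq : lam / (1 - lam) = Real.log (1 / lam))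
    (G : ℕ → ℝ → ℝ)
    (hG : ∀ (t : ℕ) (θ : ℝ),
      G t θ = (μ {ω | ∀ s : Fin n, t ≤ (s : ℕ) → v s ω < θ}).toReal)
    (A W : ℕ → ℝ → ℝ)
    (hWn : ∀ θ : ℝ, W n θ = 0)
    (hW : ∀ (t : Fin n) (θ : ℝ), W t θ =
      ∫ ω, max (if θ < v t ω then G ((t : ℕ) + 1) (v t ω) else 0)
               (W ((t : ℕ) + 1) (max θ (v t ω))) ∂μ)
    (hAn : ∀ θ : ℝ, A n θ = 0)
    (hA : ∀ (t : Fin n) (θ : ℝ), A t θ =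
      ∫ ω, (if θ < v t ω ∧ lam ≤ G ((t : ℕ) + 1) (v t ω)
            then G ((t : ℕ) + 1) (v t ω)
            else A ((t : ℕ) + 1) (max θ (v t ω))) ∂μ) :
    ∀ θ : ℝ, A 0 θ ≥ Real.log (1 / lam) * W 0 θ := by
  obtain rfl : G = probAllBelow μ v := funext fun t => funext (hG t)
  have key (t : ℕ) (ht : t ≤ n) : CatchInvariant lam (probAllBelow μ v t) (A t) (W t) := by
    induction ht using Nat.decreasingInduction with
    | self =>
      rw [funext (probAllBelow_self (μ := μ) (v := v)), funext hAn, funext hWn]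
      exact CatchInvariant.terminal hlam.2
    | of_succ t ht ih =>
      have hGt : probAllBelow μ v t
          = fun θ => μ.real {ω | v ⟨t, ht⟩ ω < θ} * probAllBelow μ v (t + 1) θ :=
        funext (probAllBelow_eq_mul hindep ht)
      have hAt : A t = fun θ =>
          ∫ ω, unawarePayoff lam (probAllBelow μ v (t + 1)) (A (t + 1)) θ (v ⟨t, ht⟩ ω) ∂μ :=
        funext (hA ⟨t, ht⟩)
      have hWt : W t = fun θ =>
          ∫ ω, awarePayoff (probAllBelow μ v (t + 1)) (W (t + 1)) θ (v ⟨t, ht⟩ ω) ∂μ :=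
        funext (hW ⟨t, ht⟩)
      rw [hGt, hAt, hWt]
      exact ih.step hlam hlam_eq (hmeas _) (hatomless _) (monotone_probAllBelow _)
        (fun _ => measureReal_nonneg) (fun _ => measureReal_le_one)
  exact (key 0 n.zero_le).mul_aware_le

/-- Theorem 4.1 (Main Result 2). Boxes are 0-indexed: `v 0, …, v (n-1)` are
independent random variables with atomless distributions, and `λ ∈ (0,1)` is
the unique solution of `λ/(1−λ) = ln(1/λ)`.
`G t θ = Pr[v s < θ for all s ≥ t]` (so `G n θ = 1`).
The optimal order-aware winning probability satisfies `W n θ = 0` and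
`W t θ = E[max (1{v t > θ}·G (t+1) (v t)) (W (t+1) (max θ (v t)))]`;
the order-unaware algorithm's winning probability satisfies `A n θ = 0` and
`A t θ = E[ if (v t > θ and G (t+1) (v t) ≥ λ) then G (t+1) (v t)
           else A (t+1) (max θ (v t)) ]`.
Then for every initial threshold `θ`, `A 1(θ) ≥ ln(1/λ) · W 1(θ)`, i.e.
(0-indexed) `A 0 θ ≥ ln(1/λ) · W 0 θ`. -/
theorem order_unaware_catch_max {Ω : Type*} [MeasurableSpace Ω]
    (μ : Measure Ω) [IsProbabilityMeasure μ]
    (n : ℕ) (hn : 1 ≤ n)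
    (v : Fin n → Ω → ℝ)
    (hmeas : ∀ t, Measurable (v t))
    (hindep : iIndepFun v μ)
    (hatomless : ∀ t (x : ℝ), μ {ω | v t ω = x} = 0)
    (lam : ℝ) (hlam : lam ∈ Set.Ioo (0 : ℝ) 1)
    (hlam_eq : lam / (1 - lam) = Real.log (1 / lam))
    (G : ℕ → ℝ → ℝ)
    (hG : ∀ (t : ℕ) (θ : ℝ),
      G t θ = (μ {ω | ∀ s : Fin n, t ≤ (s : ℕ) → v s ω < θ}).toReal)
    (A W : ℕ → ℝ → ℝ)
    (hWn : ∀ θ : ℝ, W n θ = 0)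
    (hW : ∀ (t : Fin n) (θ : ℝ), W t θ =
      ∫ ω, max (if θ < v t ω then G ((t : ℕ) + 1) (v t ω) else 0)
               (W ((t : ℕ) + 1) (max θ (v t ω))) ∂μ)
    (hAn : ∀ θ : ℝ, A n θ = 0)
    (hA : ∀ (t : Fin n) (θ : ℝ), A t θ =
      ∫ ω, (if θ < v t ω ∧ lam ≤ G ((t : ℕ) + 1) (v t ω)
            then G ((t : ℕ) + 1) (v t ω)
            else A ((t : ℕ) + 1) (max θ (v t ω))) ∂μ) :
    ∀ θ : ℝ, A 0 θ ≥ Real.log (1 / lam) * W 0 θ :=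
  order_unaware_catch_max_general μ n v hmeas hindep hatomless lam hlam hlam_eq G hG A W hWn hW hAn
    hA
end

section
/- For every real α > 0, ((α/2)·e^{−α} + e^{−α/2} − e^{−α}) ≤ 0.57 · (1 − e^{−α/2} + e^{−α}). In words: the limiting ratio between the winning probability of a single-threshold algorithm and that of the best order-aware algorithm in the hard instance of Claim 4.3 is at most 0.57 for every choice of the threshold parameter α, so no single-threshold algorithm guarantees an order competitive ratio better than 0.57 for the max-probability objective. -/
/-!
With `v = e^{α/4} ≥ 1` the inequality reads
`2 log v / v⁴ + 1/v² - 1/v⁴ ≤ 0.57 (1 - 1/v² + 1/v⁴)`. Bounding `log v` by its `[2/1]` Padé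
approximant at `1` turns it into the nonnegativity of a quintic in `v`, whose minimum on
`[0, ∞)` is only about `0.0023` (near `v = 1.361`). The true maximal
ratio is about `0.5696`, so the cruder bound `log v ≤ (v - 1/v)/2` would not suffice.
-/

namespace Real

/-- At the value of the Padé approximant, the degree-four Taylor polynomial of `exp` already
exceeds `u`. -/
theorem log_le_pade_of_one_le {u : ℝ} (hu : 1 ≤ u) :
    log u ≤ (u - 1) * (u + 5) / (2 * (2 * u + 1)) := by
  set z := (u - 1) * (u + 5) / (2 * (2 * u + 1)) with hz
  have hz0 : 0 ≤ z := by positivity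
  have htaylor : 1 + z + z ^ 2 / 2 + z ^ 3 / 6 + z ^ 4 / 24 ≤ exp z := by
    simpa [Finset.sum_range_succ, Nat.factorial] using sum_le_exp_of_nonneg hz0 5
  have hgap : 1 + z + z ^ 2 / 2 + z ^ 3 / 6 + z ^ 4 / 24 - u =
      (u - 1) ^ 4 * (u ^ 4 + 36 * u ^ 3 + 606 * u ^ 2 - 28 * u + 249) /
        (24 * (2 * (2 * u + 1)) ^ 4) := by
    rw [hz]; field_simp; ring
  have hquartic : 0 ≤ u ^ 4 + 36 * u ^ 3 + 606 * u ^ 2 - 28 * u + 249 := by nlinarith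
  have hu_le : u ≤ exp z := by
    have : 0 ≤ 1 + z + z ^ 2 / 2 + z ^ 3 / 6 + z ^ 4 / 24 - u := by rw [hgap]; positivity
    linarith
  calc log u ≤ log (exp z) := log_le_log (by linarith) hu_le
    _ = z := log_exp z

end Real

theorem single_threshold_ratio_le_of_one_le {v : ℝ} (hv : 1 ≤ v) :
    2 * Real.log v / v ^ 4 + 1 / v ^ 2 - 1 / v ^ 4 ≤ 0.57 * (1 - 1 / v ^ 2 + 1 / v ^ 4) := by
  have hv0 : 0 < v := by linarith
  have hquintic : 0 ≤ 0.57 * (v ^ 4 - v ^ 2 + 1) * (2 * v + 1) - (v ^ 2 - 1) * (2 * v + 1)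
      - (v - 1) * (v + 5) := by
    nlinarith [sq_nonneg (v - 1.361), sq_nonneg (v * v - 2 * v), sq_nonneg (v - 1),
      sq_nonneg (v * (v - 1.361)), sq_nonneg (v * v - 1.852 * v)]
  have hclear : 0.57 * (1 - 1 / v ^ 2 + 1 / v ^ 4) -
      (2 * ((v - 1) * (v + 5) / (2 * (2 * v + 1))) / v ^ 4 + 1 / v ^ 2 - 1 / v ^ 4) =
      (0.57 * (v ^ 4 - v ^ 2 + 1) * (2 * v + 1) - (v ^ 2 - 1) * (2 * v + 1)
        - (v - 1) * (v + 5)) / (v ^ 4 * (2 * v + 1)) := by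
    field_simp; ring
  calc 2 * Real.log v / v ^ 4 + 1 / v ^ 2 - 1 / v ^ 4
      ≤ 2 * ((v - 1) * (v + 5) / (2 * (2 * v + 1))) / v ^ 4 + 1 / v ^ 2 - 1 / v ^ 4 := by
        gcongr; exact Real.log_le_pade_of_one_le hv
    _ ≤ 0.57 * (1 - 1 / v ^ 2 + 1 / v ^ 4) := by
        rw [← sub_nonneg, hclear]; positivity

/-- For every real `α > 0`,
`(α/2)·e^{−α} + e^{−α/2} − e^{−α} ≤ 0.57 · (1 − e^{−α/2} + e^{−α})`:
the limiting ratio between the winning probability of a single-threshold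
algorithm and that of the best order-aware algorithm in the hard instance of
Claim 4.3 is at most 0.57 for every threshold parameter `α`. -/
theorem single_threshold_ratio_le (α : ℝ) (hα : 0 < α) :
    (α / 2) * Real.exp (-α) + Real.exp (-α / 2) - Real.exp (-α)
      ≤ 0.57 * (1 - Real.exp (-α / 2) + Real.exp (-α)) := by
  set v := Real.exp (α / 4) with hv
  have hv1 : 1 ≤ v := Real.one_le_exp (by positivity)
  have hα_log : α = 4 * Real.log v := by rw [hv, Real.log_exp]; ring
  have hexp (k : ℕ) : Real.exp (-(k * (α / 4))) = 1 / v ^ k := by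
    rw [Real.exp_neg, Real.exp_nat_mul, one_div]
  have h2 := hexp 2
  have h4 := hexp 4
  push_cast at h2 h4
  rw [show -α / 2 = -(2 * (α / 4)) by ring, show -α = -(4 * (α / 4)) by ring, h2, h4]
  convert single_threshold_ratio_le_of_one_le hv1 using 2
  rw [hα_log]; ring
end
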